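/- arXiv:1705.06533 — 5 statements merged into one kernel-verified Lean document; each statement's English description precedes it below -/
import Mathlib

section
/- Consider a discrete-time investment problem over periods t = 0, 1, ..., T with k risky assets whose returns in each period are (conditionally) i.i.d. multivariate normal N_k(μ, Σ) with Σ symmetric positive definite, gross risk-free returns R_{f,i} > 0 (net returns r_{f,i} = R_{f,i} − 1) for i = 1, ..., T, and exponential utility U(x) = −exp(−γx) with risk aversion γ > 0. Define the Bellman value functions recursively by V_T(W) = −exp(−γW) and, for t = T−1, ..., 0, V_t(W) = sup over v ∈ ℝ^k of ∫ V_{t+1}( W (R_{f,t+1} + ⟨v, x − r_{f,t+1}·𝟏⟩) ) dN_k(μ,Σ)(x), where 𝟏 is the all-ones vector. Then for every t ∈ {0, ..., T} and every W > 0, V_t(W) = −exp( −γ W ∏_{i=t+1}^{T} R_{f,i} − (1/2) ∑_{s=t+1}^{T} (μ − r_{f,s}𝟏)ᵀ Σ^{−1} (μ − r_{f,s}𝟏) ) (with the empty product equal to 1 and empty sum equal to 0), and for t ≤ T−1 the supremum defining V_t(W) is attained uniquely at the portfolio weight vector w_t = C_t Σ^{−1}(μ − r_{f,t+1}𝟏)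 with C_t = ( γ W ∏_{i=t+2}^{T} R_{f,i} )^{−1}. -/
open MeasureTheory Matrix Real

/-!
Backward induction on `t`. If `V (t + 1) y = -exp (-c y - d)` for `y ≠ 0`, the next wealth
`W (R + vᵀ(x - r𝟏))` is affine in the Gaussian return `x` and vanishes only on a null
hyperplane, so by the Gaussian moment generating function the Bellman objective at `v` is `-exp`
of a constant plus `½ uᵀΣu - uᵀ(μ - r𝟏)` with `u = c W v`. Completing the square, this quadratic
is minimal exactly at `u = Σ⁻¹(μ - r𝟏)`, with value `-½ (μ - r𝟏)ᵀΣ⁻¹(μ - r𝟏)`: this gives the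
optimal weights and the closed form of `V t`. The closed form fails at `W = 0`, which is why the
induction runs over `W ≠ 0`. The moment generating function comes from the same completion of the
square and the substitution `x = Σ^{1/2} z`.
-/

/-- The `k`-dimensional Gaussian probability measure `N_k(μ, S)` on `ℝ^k`, defined via its
Lebesgue density `((2π)^k det S)^{-1/2} exp(-(x-μ)ᵀ S⁻¹ (x-μ)/2)`. -/
noncomputable def multivariateGaussian {k : ℕ} (μ : Fin k → ℝ)
    (S : Matrix (Fin k) (Fin k) ℝ) : Measure (Fin k → ℝ) :=
  volume.withDensity fun x =>
    ENNReal.ofReal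
      (Real.exp (-((x - μ) ⬝ᵥ (S⁻¹ *ᵥ (x - μ))) / 2) / Real.sqrt ((2 * π) ^ k * S.det))

section GaussianIntegrals

variable {ι : Type*} [Fintype ι]

namespace Matrix

theorem IsHermitian.dotProduct_mulVec_comm {A : Matrix ι ι ℝ} (hA : A.IsHermitian)
    (x y : ι → ℝ) : x ⬝ᵥ (A *ᵥ y) = y ⬝ᵥ (A *ᵥ x) := by
  rw [dotProduct_mulVec, ← mulVec_transpose, ← conjTranspose_eq_transpose_of_trivial, hA.eq,
    dotProduct_comm]

theorem IsHermitian.half_quadForm_sub_dotProduct [DecidableEq ι] {A : Matrix ι ι ℝ}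
    (hA : A.IsHermitian) (hdet : IsUnit A.det) (u m : ι → ℝ) :
    u ⬝ᵥ (A *ᵥ u) / 2 - u ⬝ᵥ m
      = (u - A⁻¹ *ᵥ m) ⬝ᵥ (A *ᵥ (u - A⁻¹ *ᵥ m)) / 2 - m ⬝ᵥ (A⁻¹ *ᵥ m) / 2 := by
  have hm : A *ᵥ (A⁻¹ *ᵥ m) = m := by rw [mulVec_mulVec, mul_nonsing_inv _ hdet, one_mulVec]
  rw [mulVec_sub, hm, sub_dotProduct, dotProduct_sub, dotProduct_sub,
    hA.dotProduct_mulVec_comm (A⁻¹ *ᵥ m) u, hm, dotProduct_comm (A⁻¹ *ᵥ m) m]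
  ring

namespace PosDef

variable [DecidableEq ι] {A : Matrix ι ι ℝ}

theorem half_quadForm_sub_dotProduct_ge (hA : A.PosDef) (u m : ι → ℝ) :
    -(m ⬝ᵥ (A⁻¹ *ᵥ m)) / 2 ≤ u ⬝ᵥ (A *ᵥ u) / 2 - u ⬝ᵥ m := by
  have := hA.posSemidef.dotProduct_mulVec_nonneg (u - A⁻¹ *ᵥ m)
  rw [hA.isHermitian.half_quadForm_sub_dotProduct hA.det_pos.ne'.isUnit]
  simp only [star_trivial] at this
  linarith

theorem half_quadForm_sub_dotProduct_eq_iff (hA : A.PosDef) (u m : ι → ℝ) :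
    u ⬝ᵥ (A *ᵥ u) / 2 - u ⬝ᵥ m = -(m ⬝ᵥ (A⁻¹ *ᵥ m)) / 2 ↔ u = A⁻¹ *ᵥ m := by
  rw [hA.isHermitian.half_quadForm_sub_dotProduct hA.det_pos.ne'.isUnit, ← sub_eq_zero (a := u)]
  constructor
  · intro h
    by_contra hne
    have := hA.dotProduct_mulVec_pos hne
    simp only [star_trivial] at this
    linarith
  · intro h
    rw [h, mulVec_zero, dotProduct_zero]
    ring

end PosDef

end Matrix

theorem integral_exp_neg_dotProduct_self_div_two :
    ∫ z : ι → ℝ, exp (-(z ⬝ᵥ z) / 2) = sqrt (2 * π) ^ Fintype.card ι := by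
  have hprod : ∀ z : ι → ℝ, exp (-(z ⬝ᵥ z) / 2) = ∏ i, exp (-(1 / 2) * z i ^ 2) := by
    intro z
    rw [← exp_sum, dotProduct, ← Finset.sum_neg_distrib, Finset.sum_div]
    simp only [sq]
    congr 1
    refine Finset.sum_congr rfl fun i _ => by ring
  simp_rw [hprod]
  rw [integral_fintype_prod_volume_eq_prod (f := fun _ t => exp (-(1 / 2) * t ^ 2)),
    Finset.prod_const, Finset.card_univ, integral_gaussian]
  congr 2
  ring

theorem integral_comp_mulVec [DecidableEq ι] {B : Matrix ι ι ℝ} (hB : B.det ≠ 0) {f : (ι → ℝ) → ℝ}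
    (hf : Continuous f) : ∫ x, f x = |B.det| * ∫ z, f (B *ᵥ z) := by
  have hcont : Continuous (toLin' B) := LinearMap.continuous_of_finiteDimensional _
  have hmap : ∫ z, f (B *ᵥ z) = ∫ x, f x ∂(Measure.map (toLin' B) volume) := by
    rw [integral_map hcont.aemeasurable hf.aestronglyMeasurable]
    simp only [toLin'_apply]
  rw [hmap, Real.map_matrix_volume_pi_eq_smul_volume_pi hB, integral_smul_measure,
    ENNReal.toReal_ofReal (by positivity), abs_inv, smul_eq_mul, ← mul_assoc,
    mul_inv_cancel₀ (abs_pos.mpr hB).ne', one_mul]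

open scoped MatrixOrder in
theorem Matrix.PosDef.integral_exp_neg_inv_quadForm_div_two [DecidableEq ι] {S : Matrix ι ι ℝ}
    (hS : S.PosDef) :
    ∫ y : ι → ℝ, exp (-(y ⬝ᵥ (S⁻¹ *ᵥ y)) / 2) = sqrt ((2 * π) ^ Fintype.card ι * S.det) := by
  set B := CFC.sqrt S
  have hBB : B * B = S := CFC.sqrt_mul_sqrt_self S (nonneg_iff_posSemidef.mpr hS.posSemidef)
  have hBT : Bᵀ = B := by
    rw [← conjTranspose_eq_transpose_of_trivial]
    exact (nonneg_iff_posSemidef.mp (CFC.sqrt_nonneg S)).1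
  have hdet : B.det * B.det = S.det := by rw [← det_mul, hBB]
  have hB : B.det ≠ 0 := fun h => hS.det_pos.ne' (by rw [← hdet, h, mul_zero])
  have hquad : ∀ z, (B *ᵥ z) ⬝ᵥ (S⁻¹ *ᵥ (B *ᵥ z)) = z ⬝ᵥ z := by
    intro z
    have hBSB : B * S⁻¹ * B = 1 := by
      rw [← hBB, mul_inv_rev, ← Matrix.mul_assoc, mul_nonsing_inv _ hB.isUnit, Matrix.one_mul,
        nonsing_inv_mul _ hB.isUnit]
    rw [dotProduct_mulVec, vecMul_mulVec, hBT, dotProduct_mulVec, vecMul_vecMul, hBSB,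
      vecMul_one]
  rw [integral_comp_mulVec hB (by fun_prop)]
  simp only [hquad]
  rw [integral_exp_neg_dotProduct_self_div_two, ← hdet,
    sqrt_mul (by positivity : (0 : ℝ) ≤ (2 * π) ^ Fintype.card ι), sqrt_mul_self_eq_abs, mul_comm]
  congr 1
  rw [show (2 * π) ^ Fintype.card ι = (√(2 * π) ^ Fintype.card ι) ^ 2 by
    rw [pow_right_comm, sq_sqrt (by positivity)], sqrt_sq (by positivity)]

theorem Matrix.PosDef.integral_exp_dotProduct_sub_inv_quadForm [DecidableEq ι]
    {S : Matrix ι ι ℝ} (hS : S.PosDef) (μ a : ι → ℝ) :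
    ∫ x : ι → ℝ, exp (a ⬝ᵥ x - (x - μ) ⬝ᵥ (S⁻¹ *ᵥ (x - μ)) / 2)
      = sqrt ((2 * π) ^ Fintype.card ι * S.det) * exp (a ⬝ᵥ μ + a ⬝ᵥ (S *ᵥ a) / 2) := by
  have hSinv : S⁻¹⁻¹ = S := nonsing_inv_nonsing_inv S hS.det_pos.ne'.isUnit
  -- complete the square in `x - μ`, with the roles of `S` and `S⁻¹` exchanged
  have hsquare : ∀ x : ι → ℝ, exp (a ⬝ᵥ x - (x - μ) ⬝ᵥ (S⁻¹ *ᵥ (x - μ)) / 2)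
      = exp (a ⬝ᵥ μ + a ⬝ᵥ (S *ᵥ a) / 2)
        * exp (-((x - (μ + S *ᵥ a)) ⬝ᵥ (S⁻¹ *ᵥ (x - (μ + S *ᵥ a)))) / 2) := by
    intro x
    rw [← exp_add]
    congr 1
    have h := hS.inv.isHermitian.half_quadForm_sub_dotProduct hS.inv.det_pos.ne'.isUnit (x - μ) a
    rw [hSinv, sub_sub] at h
    have hax : a ⬝ᵥ x = a ⬝ᵥ μ + (x - μ) ⬝ᵥ a := by
      rw [dotProduct_comm (x - μ), dotProduct_sub]
      ring
    linarith
  simp_rw [hsquare, integral_const_mul]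
  rw [integral_sub_right_eq_self (fun y => exp (-(y ⬝ᵥ (S⁻¹ *ᵥ y)) / 2)),
    hS.integral_exp_neg_inv_quadForm_div_two, mul_comm]

theorem ae_dotProduct_ne {v : ι → ℝ} (hv : v ≠ 0) (c : ℝ) :
    ∀ᵐ x ∂(volume : Measure (ι → ℝ)), v ⬝ᵥ x ≠ c := by
  have hL : dotProductBilin ℝ ℝ v ≠ 0 := fun h =>
    hv (dotProduct_self_eq_zero.mp (LinearMap.congr_fun h v))
  exact (ae_comp_linearMap_mem_iff (dotProductBilin ℝ ℝ v) volume volume (LinearMap.surjective hL)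
    (measurableSet_singleton c).compl).mpr (Measure.ae_ne volume c)

end GaussianIntegrals

theorem integral_exp_dotProduct_multivariateGaussian {k : ℕ} {S : Matrix (Fin k) (Fin k) ℝ}
    (hS : S.PosDef) (μ u : Fin k → ℝ) :
    ∫ x, exp (u ⬝ᵥ x) ∂multivariateGaussian μ S = exp (u ⬝ᵥ μ + u ⬝ᵥ (S *ᵥ u) / 2) := by
  rw [multivariateGaussian, integral_withDensity_eq_integral_toReal_smul (by fun_prop)
    (ae_of_all _ fun _ => ENNReal.ofReal_lt_top)]
  set c := sqrt ((2 * π) ^ k * S.det)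
  have hc : 0 < c := sqrt_pos.mpr (mul_pos (by positivity) hS.det_pos)
  have hdensity : ∀ x : Fin k → ℝ,
      (ENNReal.ofReal (exp (-((x - μ) ⬝ᵥ (S⁻¹ *ᵥ (x - μ))) / 2) / c)).toReal • exp (u ⬝ᵥ x)
        = exp (u ⬝ᵥ x - (x - μ) ⬝ᵥ (S⁻¹ *ᵥ (x - μ)) / 2) / c := by
    intro x
    rw [ENNReal.toReal_ofReal (by positivity), smul_eq_mul, div_mul_eq_mul_div, ← exp_add]
    ring_nf
  simp_rw [hdensity]
  rw [integral_div, hS.integral_exp_dotProduct_sub_inv_quadForm, Fintype.card_fin,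
    mul_div_cancel_left₀ _ hc.ne']

theorem integral_neg_exp_wealth_multivariateGaussian {k : ℕ} {μ : Fin k → ℝ}
    {S : Matrix (Fin k) (Fin k) ℝ} (hS : S.PosDef) {U : ℝ → ℝ} {c d : ℝ}
    (hU : ∀ y ≠ 0, U y = -exp (-c * y - d)) {W a : ℝ} (hW : W ≠ 0) (ha : a ≠ 0)
    (b v : Fin k → ℝ) :
    ∫ x, U (W * (a + v ⬝ᵥ (x - b))) ∂multivariateGaussian μ S
      = -exp (-c * W * a - d
          + (((c * W) • v) ⬝ᵥ (S *ᵥ ((c * W) • v)) / 2 - ((c * W) • v) ⬝ᵥ (μ - b))) := by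
  have hwealth : ∀ᵐ x ∂multivariateGaussian μ S, a + v ⬝ᵥ (x - b) ≠ 0 := by
    rcases eq_or_ne v 0 with rfl | hv
    · exact ae_of_all _ fun x => by simpa using ha
    refine (withDensity_absolutelyContinuous _ _).ae_le
      ((ae_dotProduct_ne hv (v ⬝ᵥ b - a)).mono fun x hx => ?_)
    rw [dotProduct_sub]
    contrapose! hx
    linarith
  have hU_ae : (fun x => U (W * (a + v ⬝ᵥ (x - b)))) =ᵐ[multivariateGaussian μ S]
      fun x => -exp (-c * W * a - d + c * W * (v ⬝ᵥ b)) * exp ((-(c * W) • v) ⬝ᵥ x) :=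
    hwealth.mono fun x hx => by
      dsimp only
      rw [hU _ (mul_ne_zero hW hx), neg_mul (exp _), ← exp_add, neg_smul, neg_dotProduct,
        smul_dotProduct, dotProduct_sub, smul_eq_mul]
      ring_nf
  rw [integral_congr_ae hU_ae, integral_const_mul, integral_exp_dotProduct_multivariateGaussian hS,
    neg_mul (exp _), ← exp_add]
  simp only [neg_smul, neg_dotProduct, mulVec_neg, dotProduct_neg, neg_neg, smul_dotProduct,
    dotProduct_sub, smul_eq_mul]
  ring_nf

section Bellman

variable {k : ℕ} {T : ℕ} {μ : Fin k → ℝ} {S : Matrix (Fin k) (Fin k) ℝ} {R r : ℕ → ℝ} {γ : ℝ}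
  {V : ℕ → ℝ → ℝ}

noncomputable def bellmanObjective (μ : Fin k → ℝ) (S : Matrix (Fin k) (Fin k) ℝ)
    (R r : ℕ → ℝ) (V : ℕ → ℝ → ℝ) (t : ℕ) (W : ℝ) (v : Fin k → ℝ) : ℝ :=
  ∫ x, V (t + 1) (W * (R (t + 1) + v ⬝ᵥ (x - r (t + 1) • (1 : Fin k → ℝ))))
    ∂multivariateGaussian μ S

noncomputable def sharpeRatioSq (μ : Fin k → ℝ) (S : Matrix (Fin k) (Fin k) ℝ) (ρ : ℝ) : ℝ :=
  (μ - ρ • (1 : Fin k → ℝ)) ⬝ᵥ (S⁻¹ *ᵥ (μ - ρ • (1 : Fin k → ℝ)))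

theorem bellmanObjective_eq (hS : S.PosDef) (hR : ∀ i, 1 ≤ i → i ≤ T → 0 < R i) {t : ℕ}
    (ht : t < T) (hnext : ∀ y ≠ 0, V (t + 1) y = -exp (-γ * y * ∏ i ∈ Finset.Icc (t + 2) T, R i
      - (1 / 2) * ∑ s ∈ Finset.Icc (t + 2) T, sharpeRatioSq μ S (r s)))
    {W : ℝ} (hW : W ≠ 0) (v : Fin k → ℝ) :
    letI β := γ * W * ∏ i ∈ Finset.Icc (t + 2) T, R i
    bellmanObjective μ S R r V t W v = -exp (-γ * W * ∏ i ∈ Finset.Icc (t + 1) T, R i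
      - (1 / 2) * ∑ s ∈ Finset.Icc (t + 2) T, sharpeRatioSq μ S (r s)
      + ((β • v) ⬝ᵥ (S *ᵥ (β • v)) / 2 - (β • v) ⬝ᵥ (μ - r (t + 1) • (1 : Fin k → ℝ)))) := by
  have hprod : ∏ i ∈ Finset.Icc (t + 1) T, R i = R (t + 1) * ∏ i ∈ Finset.Icc (t + 2) T, R i := by
    rw [← Finset.mul_prod_Ioc_eq_prod_Icc (by omega), ← Finset.Icc_add_one_left_eq_Ioc]
    rfl
  rw [bellmanObjective, integral_neg_exp_wealth_multivariateGaussian hS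
    (c := γ * ∏ i ∈ Finset.Icc (t + 2) T, R i)
    (d := (1 / 2) * ∑ s ∈ Finset.Icc (t + 2) T, sharpeRatioSq μ S (r s))
    (fun y hy => by rw [hnext y hy]; ring_nf) hW
    (hR (t + 1) (by omega) ht).ne', hprod, mul_right_comm γ W]
  congr 3
  ring

theorem bellmanObjective_argmax (hS : S.PosDef) (hR : ∀ i, 1 ≤ i → i ≤ T → 0 < R i)
    (hγ : 0 < γ) {t : ℕ} (ht : t < T)
    (hnext : ∀ y ≠ 0, V (t + 1) y = -exp (-γ * y * ∏ i ∈ Finset.Icc (t + 2) T, R i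
      - (1 / 2) * ∑ s ∈ Finset.Icc (t + 2) T, sharpeRatioSq μ S (r s)))
    {W : ℝ} (hW : W ≠ 0) {w : Fin k → ℝ}
    (hw : w = (γ * W * ∏ i ∈ Finset.Icc (t + 2) T, R i)⁻¹ •
      (S⁻¹ *ᵥ (μ - r (t + 1) • (1 : Fin k → ℝ)))) :
    bellmanObjective μ S R r V t W w = -exp (-γ * W * ∏ i ∈ Finset.Icc (t + 1) T, R i
      - (1 / 2) * ∑ s ∈ Finset.Icc (t + 1) T, sharpeRatioSq μ S (r s)) ∧
    (∀ v, bellmanObjective μ S R r V t W v ≤ bellmanObjective μ S R r V t W w) ∧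
    (∀ v, bellmanObjective μ S R r V t W v = bellmanObjective μ S R r V t W w → v = w) := by
  have hF := bellmanObjective_eq (γ := γ) hS hR ht hnext hW
  set β := γ * W * ∏ i ∈ Finset.Icc (t + 2) T, R i
  set m := μ - r (t + 1) • (1 : Fin k → ℝ)
  have hβ : β ≠ 0 := mul_ne_zero (mul_ne_zero hγ.ne' hW) (Finset.prod_pos fun i hi =>
    hR i (by simp at hi; omega) (Finset.mem_Icc.mp hi).2).ne'
  have hβw : β • w = S⁻¹ *ᵥ m := by rw [hw, smul_smul, mul_inv_cancel₀ hβ, one_smul]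
  have hmin := hS.half_quadForm_sub_dotProduct_eq_iff (S⁻¹ *ᵥ m) m
  refine ⟨?_, fun v => ?_, fun v hv => ?_⟩
  · have hsum : ∑ s ∈ Finset.Icc (t + 1) T, sharpeRatioSq μ S (r s)
        = m ⬝ᵥ (S⁻¹ *ᵥ m) + ∑ s ∈ Finset.Icc (t + 2) T, sharpeRatioSq μ S (r s) := by
      rw [← Finset.add_sum_Ioc_eq_sum_Icc (by omega), ← Finset.Icc_add_one_left_eq_Ioc]
      rfl
    rw [hF, hβw, hmin.mpr rfl, hsum]
    ring_nf
  · rw [hF, hF, hβw, hmin.mpr rfl]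
    exact neg_le_neg (exp_le_exp.mpr (by linarith [hS.half_quadForm_sub_dotProduct_ge (β • v) m]))
  · rw [hF, hF, hβw, hmin.mpr rfl] at hv
    have hv' := exp_injective (neg_injective hv)
    refine smul_right_injective _ hβ (((hS.half_quadForm_sub_dotProduct_eq_iff _ m).mp ?_).trans
      hβw.symm)
    linarith

theorem bellman_value_eq (hS : S.PosDef) (hR : ∀ i, 1 ≤ i → i ≤ T → 0 < R i) (hγ : 0 < γ)
    (hVT : ∀ W, V T W = -exp (-γ * W))
    (hVrec : ∀ t < T, ∀ W, V t W = ⨆ v, bellmanObjective μ S R r V t W v)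
    {t : ℕ} (ht : t ≤ T) {W : ℝ} (hW : W ≠ 0) :
    V t W = -exp (-γ * W * ∏ i ∈ Finset.Icc (t + 1) T, R i
      - (1 / 2) * ∑ s ∈ Finset.Icc (t + 1) T, sharpeRatioSq μ S (r s)) := by
  induction ht using Nat.decreasingInduction generalizing W with
  | self =>
    rw [hVT, Finset.Icc_eq_empty (by omega), Finset.prod_empty, Finset.sum_empty]
    ring_nf
  | of_succ t ht ih =>
    obtain ⟨hvalue, hle, -⟩ := bellmanObjective_argmax hS hR hγ ht (fun y hy => ih hy) hW rfl
    rw [hVrec t ht W, ← hvalue]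
    exact le_antisymm (ciSup_le hle) (le_ciSup ⟨_, Set.forall_mem_range.mpr hle⟩ _)

end Bellman

theorem multiperiod_exponential_utility_bellman_general {k : ℕ} (T : ℕ)
    (μ : Fin k → ℝ) (S : Matrix (Fin k) (Fin k) ℝ) (hS : S.PosDef)
    (R r : ℕ → ℝ) (hR : ∀ i, 1 ≤ i → i ≤ T → 0 < R i)
    (γ : ℝ) (hγ : 0 < γ)
    (V : ℕ → ℝ → ℝ)
    (hVT : ∀ W, V T W = -Real.exp (-γ * W))
    (hVrec : ∀ t, t < T → ∀ W, V t W =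
      ⨆ v : Fin k → ℝ,
        ∫ x, V (t + 1) (W * (R (t + 1) + v ⬝ᵥ (x - r (t + 1) • (1 : Fin k → ℝ))))
          ∂(multivariateGaussian μ S)) :
    (∀ t ≤ T, ∀ W : ℝ, 0 < W →
      V t W = -Real.exp (-γ * W * ∏ i ∈ Finset.Icc (t + 1) T, R i
        - (1 / 2) * ∑ s ∈ Finset.Icc (t + 1) T,
            (μ - r s • (1 : Fin k → ℝ)) ⬝ᵥ (S⁻¹ *ᵥ (μ - r s • (1 : Fin k → ℝ))))) ∧
    (∀ t, t < T → ∀ W : ℝ, 0 < W →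
      ∀ w : Fin k → ℝ,
        w = (γ * W * ∏ i ∈ Finset.Icc (t + 2) T, R i)⁻¹ •
              (S⁻¹ *ᵥ (μ - r (t + 1) • (1 : Fin k → ℝ))) →
        (∀ v : Fin k → ℝ,
          (∫ x, V (t + 1) (W * (R (t + 1) + v ⬝ᵥ (x - r (t + 1) • (1 : Fin k → ℝ))))
              ∂(multivariateGaussian μ S)) ≤
            ∫ x, V (t + 1) (W * (R (t + 1) + w ⬝ᵥ (x - r (t + 1) • (1 : Fin k → ℝ))))
              ∂(multivariateGaussian μ S)) ∧
        (∀ v : Fin k → ℝ,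
          (∫ x, V (t + 1) (W * (R (t + 1) + v ⬝ᵥ (x - r (t + 1) • (1 : Fin k → ℝ))))
              ∂(multivariateGaussian μ S)) =
            (∫ x, V (t + 1) (W * (R (t + 1) + w ⬝ᵥ (x - r (t + 1) • (1 : Fin k → ℝ))))
              ∂(multivariateGaussian μ S)) → v = w)) := by
  have hvalue := fun t (ht : t ≤ T) W (hW : W ≠ 0) =>
    bellman_value_eq hS hR hγ hVT hVrec ht hW
  refine ⟨fun t ht W hW => hvalue t ht W hW.ne', fun t ht W hW w hw => ?_⟩
  obtain ⟨-, hle, huniq⟩ :=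
    bellmanObjective_argmax hS hR hγ ht (fun y hy => hvalue (t + 1) ht y hy) hW.ne' hw
  exact ⟨hle, huniq⟩

/-- (Bellman-recursion form of the paper's Proposition 1.)
For the multi-period exponential-utility portfolio problem with i.i.d. `N_k(μ, Σ)` returns,
gross risk-free returns `R i > 0` (net returns `r i = R i - 1`) and risk aversion `γ > 0`,
the Bellman value functions `V t`, defined by `V T W = -exp(-γ W)` and
`V t W = ⨆ v, ∫ V (t+1) (W (R (t+1) + ⟨v, x - r (t+1)·𝟏⟩)) dN_k(μ,Σ)(x)` for `t < T`,
satisfy, for all `t ≤ T` and `W > 0`,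
`V t W = -exp(-γ W ∏_{i=t+1}^T R i - (1/2) ∑_{s=t+1}^T (μ - r s·𝟏)ᵀ Σ⁻¹ (μ - r s·𝟏))`,
and for `t < T` the supremum is attained uniquely at
`w_t = C_t Σ⁻¹ (μ - r (t+1)·𝟏)` with `C_t = (γ W ∏_{i=t+2}^T R i)⁻¹`. -/
theorem multiperiod_exponential_utility_bellman {k : ℕ} (T : ℕ)
    (μ : Fin k → ℝ) (S : Matrix (Fin k) (Fin k) ℝ) (hS : S.PosDef)
    (R r : ℕ → ℝ) (hR : ∀ i, 1 ≤ i → i ≤ T → 0 < R i) (hr : ∀ i, r i = R i - 1)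
    (γ : ℝ) (hγ : 0 < γ)
    (V : ℕ → ℝ → ℝ)
    (hVT : ∀ W, V T W = -Real.exp (-γ * W))
    (hVrec : ∀ t, t < T → ∀ W, V t W =
      ⨆ v : Fin k → ℝ,
        ∫ x, V (t + 1) (W * (R (t + 1) + v ⬝ᵥ (x - r (t + 1) • (1 : Fin k → ℝ))))
          ∂(multivariateGaussian μ S)) :
    (∀ t ≤ T, ∀ W : ℝ, 0 < W →
      V t W = -Real.exp (-γ * W * ∏ i ∈ Finset.Icc (t + 1) T, R i
        - (1 / 2) * ∑ s ∈ Finset.Icc (t + 1) T,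
            (μ - r s • (1 : Fin k → ℝ)) ⬝ᵥ (S⁻¹ *ᵥ (μ - r s • (1 : Fin k → ℝ))))) ∧
    (∀ t, t < T → ∀ W : ℝ, 0 < W →
      ∀ w : Fin k → ℝ,
        w = (γ * W * ∏ i ∈ Finset.Icc (t + 2) T, R i)⁻¹ •
              (S⁻¹ *ᵥ (μ - r (t + 1) • (1 : Fin k → ℝ))) →
        (∀ v : Fin k → ℝ,
          (∫ x, V (t + 1) (W * (R (t + 1) + v ⬝ᵥ (x - r (t + 1) • (1 : Fin k → ℝ))))
              ∂(multivariateGaussian μ S)) ≤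
            ∫ x, V (t + 1) (W * (R (t + 1) + w ⬝ᵥ (x - r (t + 1) • (1 : Fin k → ℝ))))
              ∂(multivariateGaussian μ S)) ∧
        (∀ v : Fin k → ℝ,
          (∫ x, V (t + 1) (W * (R (t + 1) + v ⬝ᵥ (x - r (t + 1) • (1 : Fin k → ℝ))))
              ∂(multivariateGaussian μ S)) =
            (∫ x, V (t + 1) (W * (R (t + 1) + w ⬝ᵥ (x - r (t + 1) • (1 : Fin k → ℝ))))
              ∂(multivariateGaussian μ S)) → v = w)) :=
  multiperiod_exponential_utility_bellman_general T μ S hS R r hR γ hγ V hVT hVrec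
end

section
/- Let S be a symmetric positive definite k×k real matrix with unique symmetric positive definite square root S^{1/2} (with inverse S^{−1/2}), and let ν, m, a ∈ ℝ^k with ν ≠ m. Set q = ν − m, s = qᵀ S^{−1} q, and u = S^{−1/2} q / √s. Then (ν − a)ᵀ (S + q qᵀ)^{−1} (ν − a) = (m − a)ᵀ S^{−1} (m − a) + 2 ( √s/(1+s) ) (m − a)ᵀ S^{−1/2} u + s/(1+s) − ( s/(1+s) ) ( (m − a)ᵀ S^{−1/2} u )². -/
/-!
By Sherman–Morrison, `(S + q qᵀ)⁻¹ = S⁻¹ - p pᵀ / (1 + s)` with `p = S⁻¹ q`. Writing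
`ν - a = (m - a) + q` and `t = (m - a)ᵀ S⁻¹ q`, the quadratic form becomes
`(m - a)ᵀ S⁻¹ (m - a) + (2 t + s - t²) / (1 + s)`, and since `S^{-1/2} u = S⁻¹ q / √s`, the
scalar `(m - a)ᵀ S^{-1/2} u` is `t / √s`.
-/

open Matrix

namespace Matrix

variable {n K : Type*} [Fintype n] [DecidableEq n] [Field K]

theorem inv_add_vecMulVec {A : Matrix n n K} (hA : IsUnit A.det) (u v : n → K)
    (h : 1 + v ⬝ᵥ (A⁻¹ *ᵥ u) ≠ 0) :
    (A + vecMulVec u v)⁻¹ =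
      A⁻¹ - (1 + v ⬝ᵥ (A⁻¹ *ᵥ u))⁻¹ • vecMulVec (A⁻¹ *ᵥ u) (v ᵥ* A⁻¹) := by
  set c := 1 + v ⬝ᵥ (A⁻¹ *ᵥ u)
  set P := vecMulVec u (v ᵥ* A⁻¹)
  apply inv_eq_right_inv
  have hAP : A * vecMulVec (A⁻¹ *ᵥ u) (v ᵥ* A⁻¹) = P := by
    rw [mul_vecMulVec, mulVec_mulVec, mul_nonsing_inv A hA, one_mulVec]
  have huvP : vecMulVec u v * vecMulVec (A⁻¹ *ᵥ u) (v ᵥ* A⁻¹) = (c - 1) • P := by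
    rw [vecMulVec_mul_vecMulVec, vecMulVec_smul, add_sub_cancel_left]
  calc (A + vecMulVec u v) * (A⁻¹ - c⁻¹ • vecMulVec (A⁻¹ *ᵥ u) (v ᵥ* A⁻¹))
      = 1 + P - c⁻¹ • (c • P) := by
        rw [mul_sub, add_mul, mul_nonsing_inv A hA, vecMulVec_mul, Matrix.mul_smul, add_mul, hAP,
          huvP]
        module
    _ = 1 := by rw [smul_smul, inv_mul_cancel₀ h, one_smul, add_sub_cancel_right]

theorem dotProduct_inv_add_vecMulVec_self_mulVec {A : Matrix n n K} (hA : IsUnit A.det)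
    (hAs : A.IsSymm) (w q : n → K) (h : 1 + q ⬝ᵥ (A⁻¹ *ᵥ q) ≠ 0) :
    (w + q) ⬝ᵥ ((A + vecMulVec q q)⁻¹ *ᵥ (w + q)) =
      w ⬝ᵥ (A⁻¹ *ᵥ w) + (2 * (w ⬝ᵥ (A⁻¹ *ᵥ q)) + q ⬝ᵥ (A⁻¹ *ᵥ q) - (w ⬝ᵥ (A⁻¹ *ᵥ q)) ^ 2) /
        (1 + q ⬝ᵥ (A⁻¹ *ᵥ q)) := by
  have hqA : q ᵥ* A⁻¹ = A⁻¹ *ᵥ q := by rw [← vecMul_transpose, hAs.inv.eq]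
  have hqw : q ⬝ᵥ (A⁻¹ *ᵥ w) = w ⬝ᵥ (A⁻¹ *ᵥ q) := by
    rw [dotProduct_mulVec, hqA, dotProduct_comm]
  rw [inv_add_vecMulVec hA q q h, hqA, sub_mulVec, smul_mulVec, vecMulVec_mulVec, op_smul_eq_smul]
  simp only [dotProduct_sub, dotProduct_smul, mulVec_add, dotProduct_add, add_dotProduct,
    smul_eq_mul]
  rw [hqw, dotProduct_comm (A⁻¹ *ᵥ q) w, dotProduct_comm (A⁻¹ *ᵥ q) q]
  field_simp
  ring

end Matrix

theorem sherman_morrison_quadratic_form_general {k : ℕ} (S Rt : Matrix (Fin k) (Fin k) ℝ)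
    (hS : S.PosDef) (hRtS : Rt * Rt = S)
    (ν m a : Fin k → ℝ) (hνm : ν ≠ m)
    (q : Fin k → ℝ) (hq : q = ν - m)
    (s : ℝ) (hs : s = q ⬝ᵥ (S⁻¹ *ᵥ q))
    (u : Fin k → ℝ) (hu : u = (Real.sqrt s)⁻¹ • (Rt⁻¹ *ᵥ q)) :
    (ν - a) ⬝ᵥ ((S + vecMulVec q q)⁻¹ *ᵥ (ν - a)) =
      (m - a) ⬝ᵥ (S⁻¹ *ᵥ (m - a)) + 2 * (Real.sqrt s / (1 + s)) * ((m - a) ⬝ᵥ (Rt⁻¹ *ᵥ u))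
        + s / (1 + s) - (s / (1 + s)) * ((m - a) ⬝ᵥ (Rt⁻¹ *ᵥ u)) ^ 2 := by
  have hs_pos : 0 < s := hs ▸ hS.inv.dotProduct_mulVec_pos (hq ▸ sub_ne_zero.mpr hνm)
  have hRtu : Rt⁻¹ *ᵥ u = (Real.sqrt s)⁻¹ • (S⁻¹ *ᵥ q) := by
    rw [hu, mulVec_smul, mulVec_mulVec, ← Matrix.mul_inv_rev, hRtS]
  have hνa : ν - a = (m - a) + q := by rw [hq]; abel
  have h1s : 1 + q ⬝ᵥ (S⁻¹ *ᵥ q) ≠ 0 := by rw [← hs]; positivity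
  rw [hνa, dotProduct_inv_add_vecMulVec_self_mulVec hS.det_pos.ne'.isUnit
    (isHermitian_iff_isSymm.mp hS.isHermitian) _ _ h1s, ← hs, hRtu, dotProduct_smul, smul_eq_mul]
  field_simp
  rw [Real.sq_sqrt hs_pos.le]
  ring

/-- With `S` symmetric positive definite, `Rt` its unique symmetric positive
definite square root (`Rt * Rt = S`, `S^{-1/2} = Rt⁻¹`), `q = ν - m ≠ 0`, `s = qᵀ S⁻¹ q`,
`u = S^{-1/2} q / √s`, the quadratic form expands as
`(ν-a)ᵀ (S + q qᵀ)⁻¹ (ν-a) = (m-a)ᵀ S⁻¹ (m-a) + 2(√s/(1+s)) (m-a)ᵀ S^{-1/2} u + s/(1+s)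
  - (s/(1+s)) ((m-a)ᵀ S^{-1/2} u)²`. -/
theorem sherman_morrison_quadratic_form {k : ℕ} (S Rt : Matrix (Fin k) (Fin k) ℝ)
    (hS : S.PosDef) (hRt : Rt.PosDef) (hRtS : Rt * Rt = S)
    (ν m a : Fin k → ℝ) (hνm : ν ≠ m)
    (q : Fin k → ℝ) (hq : q = ν - m)
    (s : ℝ) (hs : s = q ⬝ᵥ (S⁻¹ *ᵥ q))
    (u : Fin k → ℝ) (hu : u = (Real.sqrt s)⁻¹ • (Rt⁻¹ *ᵥ q)) :
    (ν - a) ⬝ᵥ ((S + vecMulVec q q)⁻¹ *ᵥ (ν - a)) =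
      (m - a) ⬝ᵥ (S⁻¹ *ᵥ (m - a)) + 2 * (Real.sqrt s / (1 + s)) * ((m - a) ⬝ᵥ (Rt⁻¹ *ᵥ u))
        + s / (1 + s) - (s / (1 + s)) * ((m - a) ⬝ᵥ (Rt⁻¹ *ᵥ u)) ^ 2 :=
  sherman_morrison_quadratic_form_general S Rt hS hRtS ν m a hνm q hq s hs u hu
end

section
/- Let k ≥ 1 be an integer, d > 0 a real number, and let B be a random variable with the Beta(k/2, d/2) distribution and u a random vector with the uniform distribution on the unit sphere S^{k−1} ⊂ ℝ^k, with B and u independent. Let S be a symmetric positive definite k×k real matrix with unique symmetric positive definite square root S^{1/2} (inverse S^{−1/2}), let m ∈ ℝ^k, and define the random vector ζ(B,u) = S^{−1} m + √(B(1−B)) S^{−1/2} u − B · S^{−1/2} u uᵀ S^{−1/2} m. Then E[ζ(B,u)] = ( (k+d−1)/(k+d) ) S^{−1} m. -/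
/-! Averaging over `u` first: invariance of its law under `u ↦ -u` gives `E[u] = 0`, and
invariance under a sign change or a transposition of coordinates, together with `‖u‖ = 1`,
gives `E[u uᵀ] = I / k`. Hence the conditional mean of `ζ` given `B` is
`S⁻¹m - (B / k) S^{-1/2} S^{-1/2} m = (1 - B / k) S⁻¹ m`, and `E[B] = k / (k + d)`. -/

open MeasureTheory Matrix

/-- The Beta(a, b) probability measure on `[0,1]`, with Lebesgue density
`x^{a-1}(1-x)^{b-1}/B(a,b)` where `B(a,b) = Γ(a)Γ(b)/Γ(a+b)` is the beta function. -/
noncomputable def betaMeasure (a b : ℝ) : Measure ℝ :=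
  volume.withDensity fun x =>
    ENNReal.ofReal (if x ∈ Set.Ioo (0 : ℝ) 1 then
      x ^ (a - 1) * (1 - x) ^ (b - 1) / (Real.Gamma a * Real.Gamma b / Real.Gamma (a + b))
    else 0)

lemma betaMeasure_eq (a b : ℝ) : betaMeasure a b = ProbabilityTheory.betaMeasure a b := by
  rw [betaMeasure, ProbabilityTheory.betaMeasure]
  congr with x
  simp only [ProbabilityTheory.betaPDF_eq, ProbabilityTheory.beta, Set.mem_Ioo]
  split_ifs <;> ring_nf

-- Inside this namespace `betaMeasure` resolves to Mathlib's `ProbabilityTheory.betaMeasure`.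
namespace ProbabilityTheory

variable {α β : ℝ}

lemma betaPDFReal_nonneg (hα : 0 < α) (hβ : 0 < β) (x : ℝ) : 0 ≤ betaPDFReal α β x := by
  by_cases hx : 0 < x ∧ x < 1
  · exact (betaPDFReal_pos hx.1 hx.2 hα hβ).le
  · simp [betaPDFReal, hx]

lemma integral_betaPDFReal (hα : 0 < α) (hβ : 0 < β) : ∫ x, betaPDFReal α β x = 1 := by
  rw [integral_eq_lintegral_of_nonneg_ae (.of_forall (betaPDFReal_nonneg hα hβ))
    (measurable_betaPDFReal α β).aestronglyMeasurable]
  simp [← betaPDF.eq_def, lintegral_betaPDF_eq_one hα hβ]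

lemma beta_add_one_left (hα : 0 < α) (hβ : 0 < β) :
    beta (α + 1) β = α / (α + β) * beta α β := by
  have hαβ : α + β ≠ 0 := (add_pos hα hβ).ne'
  have hΓ := Real.Gamma_pos_of_pos (add_pos hα hβ)
  rw [beta, beta, add_right_comm, Real.Gamma_add_one hα.ne', Real.Gamma_add_one hαβ]
  field_simp

lemma mul_betaPDFReal (hα : 0 < α) (hβ : 0 < β) (x : ℝ) :
    x * betaPDFReal α β x = α / (α + β) * betaPDFReal (α + 1) β x := by
  by_cases hx : 0 < x ∧ x < 1
  · have hB := beta_pos hα hβ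
    have hpow : x * x ^ (α - 1) = x ^ (α + 1 - 1) := by
      rw [add_sub_cancel_right, ← Real.rpow_one_add' hx.1.le (by linarith), add_sub_cancel]
    simp only [betaPDFReal, if_pos hx, beta_add_one_left hα hβ]
    rw [← hpow]
    field_simp
  · simp [betaPDFReal, hx]

lemma integrable_betaPDFReal (hα : 0 < α) (hβ : 0 < β) : Integrable (betaPDFReal α β) :=
  .of_integral_ne_zero (by rw [integral_betaPDFReal hα hβ]; exact one_ne_zero)

lemma toReal_betaPDF (hα : 0 < α) (hβ : 0 < β) (x : ℝ) :
    (betaPDF α β x).toReal = betaPDFReal α β x :=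
  ENNReal.toReal_ofReal (betaPDFReal_nonneg hα hβ x)

lemma measurable_betaPDF (α β : ℝ) : Measurable (betaPDF α β) :=
  (measurable_betaPDFReal α β).ennreal_ofReal

lemma integrable_betaMeasure_iff (hα : 0 < α) (hβ : 0 < β) {g : ℝ → ℝ} :
    Integrable g (betaMeasure α β) ↔ Integrable (fun x => betaPDFReal α β x * g x) := by
  rw [betaMeasure, integrable_withDensity_iff_integrable_smul' (measurable_betaPDF α β)
    (.of_forall fun _ => ENNReal.ofReal_lt_top)]
  simp only [toReal_betaPDF hα hβ, smul_eq_mul]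

lemma integral_betaMeasure (hα : 0 < α) (hβ : 0 < β) (g : ℝ → ℝ) :
    ∫ x, g x ∂betaMeasure α β = ∫ x, betaPDFReal α β x * g x := by
  rw [betaMeasure, integral_withDensity_eq_integral_toReal_smul
    (measurable_betaPDF α β) (.of_forall fun _ => ENNReal.ofReal_lt_top)]
  simp only [toReal_betaPDF hα hβ, smul_eq_mul]

lemma integrable_id_betaMeasure (hα : 0 < α) (hβ : 0 < β) :
    Integrable (fun x => x) (betaMeasure α β) := by
  rw [integrable_betaMeasure_iff hα hβ]
  simp_rw [mul_comm (betaPDFReal α β _), mul_betaPDFReal hα hβ]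
  exact (integrable_betaPDFReal (by linarith) hβ).const_mul _

lemma integral_id_betaMeasure (hα : 0 < α) (hβ : 0 < β) :
    ∫ x, x ∂betaMeasure α β = α / (α + β) := by
  simp_rw [integral_betaMeasure hα hβ, mul_comm (betaPDFReal α β _), mul_betaPDFReal hα hβ,
    integral_const_mul, integral_betaPDFReal (by linarith : 0 < α + 1) hβ, mul_one]

end ProbabilityTheory

lemma integrable_of_norm_le_of_ae_norm_eq_one {E F : Type*} [NormedAddCommGroup E]
    [MeasurableSpace E] [NormedAddCommGroup F] {ν : Measure E} [IsFiniteMeasure ν]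
    (hsupp : ∀ᵐ u ∂ν, ‖u‖ = 1) {g : E → F} (hg : AEStronglyMeasurable g ν) (C : ℝ)
    (hC : ∀ u, ‖u‖ = 1 → ‖g u‖ ≤ C) : Integrable g ν :=
  .mono' (integrable_const C) hg (hsupp.mono hC)

variable {k : ℕ} {ν : Measure (EuclideanSpace ℝ (Fin k))}

noncomputable def negCoord (i : Fin k) :
    EuclideanSpace ℝ (Fin k) ≃ₗᵢ[ℝ] EuclideanSpace ℝ (Fin k) :=
  LinearIsometryEquiv.piLpCongrRight 2
    fun j => if j = i then LinearIsometryEquiv.neg ℝ else LinearIsometryEquiv.refl ℝ ℝ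

lemma negCoord_apply (i j : Fin k) (u : EuclideanSpace ℝ (Fin k)) :
    negCoord i u j = if j = i then -u j else u j := by
  show (if j = i then LinearIsometryEquiv.neg ℝ else LinearIsometryEquiv.refl ℝ ℝ) (u j) = _
  split_ifs <;> rfl

section Invariant

variable (hinv : ∀ f : EuclideanSpace ℝ (Fin k) ≃ₗᵢ[ℝ] EuclideanSpace ℝ (Fin k),
  ν.map f = ν)
include hinv

lemma integral_comp_linearIsometryEquiv {F : Type*} [NormedAddCommGroup F] [NormedSpace ℝ F]
    (f : EuclideanSpace ℝ (Fin k) ≃ₗᵢ[ℝ] EuclideanSpace ℝ (Fin k))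
    (g : EuclideanSpace ℝ (Fin k) → F) : ∫ u, g (f u) ∂ν = ∫ u, g u ∂ν :=
  MeasurePreserving.integral_comp ⟨f.continuous.measurable, hinv f⟩
    f.toHomeomorph.measurableEmbedding g

lemma integral_id_eq_zero_of_isometry_invariant : ∫ u, u ∂ν = 0 := by
  have h := integral_comp_linearIsometryEquiv hinv (LinearIsometryEquiv.neg ℝ) id
  have := IsAddTorsionFree.of_module_rat (EuclideanSpace ℝ (Fin k))
  rw [← neg_eq_self, ← integral_neg]
  exact h

lemma integral_coord_mul_coord_of_ne {i j : Fin k} (hij : i ≠ j) :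
    ∫ u, u i * u j ∂ν = 0 := by
  have h := integral_comp_linearIsometryEquiv hinv (negCoord i) fun u => u i * u j
  simp only [negCoord_apply, if_neg hij.symm, ↓reduceIte, neg_mul, integral_neg] at h
  exact neg_eq_self.mp h

lemma integral_coord_mul_self_eq (i j : Fin k) :
    ∫ u, u i * u i ∂ν = ∫ u, u j * u j ∂ν := by
  have h := integral_comp_linearIsometryEquiv hinv
    (LinearIsometryEquiv.piLpCongrLeft 2 ℝ ℝ (Equiv.swap i j)) fun u => u i * u i
  simpa using h.symm

end Invariant

section Sphere
variable [IsFiniteMeasure ν] (hsupp : ∀ᵐ u ∂ν, ‖u‖ = 1)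
include hsupp

lemma integrable_id_of_ae_norm_eq_one : Integrable (fun u => u) ν :=
  integrable_of_norm_le_of_ae_norm_eq_one hsupp aestronglyMeasurable_id 1 fun _ hu => hu.le

lemma integrable_inner_smul_self (w : EuclideanSpace ℝ (Fin k)) :
    Integrable (fun u => inner ℝ u w • u) ν := by
  refine integrable_of_norm_le_of_ae_norm_eq_one hsupp (by fun_prop) ‖w‖ fun u hu => ?_
  calc ‖inner ℝ u w • u‖ = |inner ℝ u w| := by
        rw [norm_smul, hu, mul_one, Real.norm_eq_abs]
    _ ≤ ‖w‖ := by simpa [hu] using abs_real_inner_le_norm u w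

lemma integrable_coord_mul_coord (i j : Fin k) :
    Integrable (fun u : EuclideanSpace ℝ (Fin k) => u i * u j) ν := by
  refine integrable_of_norm_le_of_ae_norm_eq_one hsupp (by fun_prop) 1 fun u hu => ?_
  rw [norm_mul, ← one_mul 1, ← hu]
  exact mul_le_mul (PiLp.norm_apply_le u i) (PiLp.norm_apply_le u j) (norm_nonneg _)
    (norm_nonneg _)

end Sphere

section UniformOnSphere

variable [IsProbabilityMeasure ν]
  (hinv : ∀ f : EuclideanSpace ℝ (Fin k) ≃ₗᵢ[ℝ] EuclideanSpace ℝ (Fin k),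
    ν.map f = ν)
  (hsupp : ∀ᵐ u ∂ν, ‖u‖ = 1)
include hinv hsupp

lemma integral_coord_mul_self (i : Fin k) : ∫ u, u i * u i ∂ν = (k : ℝ)⁻¹ := by
  have hsum : ∑ j : Fin k, ∫ u, u j * u j ∂ν = 1 := by
    rw [← integral_finsetSum _ fun j _ => integrable_coord_mul_coord hsupp j j]
    calc ∫ u, ∑ j : Fin k, u j * u j ∂ν = ∫ _, (1 : ℝ) ∂ν := by
          refine integral_congr_ae (hsupp.mono fun u hu => ?_)
          simpa [hu, Real.norm_eq_abs, sq_abs, sq] using (EuclideanSpace.norm_sq_eq u).symm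
      _ = 1 := by simp
  simp_rw [integral_coord_mul_self_eq hinv _ i, Finset.sum_const, Finset.card_univ,
    Fintype.card_fin, nsmul_eq_mul] at hsum
  exact eq_inv_of_mul_eq_one_right hsum

lemma integral_inner_smul_self (w : EuclideanSpace ℝ (Fin k)) :
    ∫ u, inner ℝ u w • u ∂ν = (k : ℝ)⁻¹ • w := by
  ext i
  have hcoord (u : EuclideanSpace ℝ (Fin k)) :
      (inner ℝ u w • u) i = ∑ j, w j * (u j * u i) := by
    simp only [PiLp.smul_apply, PiLp.inner_apply, smul_eq_mul, Finset.sum_mul]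
    exact Finset.sum_congr rfl fun j _ => by simp; ring
  calc (∫ u, inner ℝ u w • u ∂ν) i = ∫ u, (inner ℝ u w • u) i ∂ν :=
        ((EuclideanSpace.proj i).integral_comp_comm (integrable_inner_smul_self hsupp w)).symm
    _ = ∑ j, w j * ∫ u, u j * u i ∂ν := by
        simp_rw [hcoord, ← integral_const_mul]
        exact integral_finsetSum _ fun j _ => (integrable_coord_mul_coord hsupp j i).const_mul _
    _ = w i * ∫ u, u i * u i ∂ν := by
        refine Finset.sum_eq_single i (fun j _ hji => ?_) (by simp)
        rw [integral_coord_mul_coord_of_ne hinv hji, mul_zero]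
    _ = ((k : ℝ)⁻¹ • w) i := by
        rw [integral_coord_mul_self hinv hsupp, PiLp.smul_apply, smul_eq_mul, mul_comm]

end UniformOnSphere

lemma integral_zeta_prod_sphere {μ : Measure ℝ} [IsProbabilityMeasure μ]
    (hB : Integrable (fun b => b) μ) [IsProbabilityMeasure ν]
    (hinv : ∀ f : EuclideanSpace ℝ (Fin k) ≃ₗᵢ[ℝ] EuclideanSpace ℝ (Fin k),
      ν.map f = ν)
    (hsupp : ∀ᵐ u ∂ν, ‖u‖ = 1)
    (A : EuclideanSpace ℝ (Fin k) →ₗ[ℝ] EuclideanSpace ℝ (Fin k))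
    (c w : EuclideanSpace ℝ (Fin k)) :
    ∫ p : ℝ × EuclideanSpace ℝ (Fin k),
        c + √(p.1 * (1 - p.1)) • A p.2 - (p.1 * inner ℝ p.2 w) • A p.2 ∂μ.prod ν =
      c - ((∫ b, b ∂μ) / k) • A w := by
  let L := LinearMap.toContinuousLinearMap A
  have hL : ∀ u, L u = A u := fun _ => rfl
  have hsqrt : Integrable (fun b : ℝ => √(b * (1 - b))) μ := by
    refine .of_bound (by fun_prop) 1 (.of_forall fun b => ?_)
    rw [Real.norm_of_nonneg (Real.sqrt_nonneg _), Real.sqrt_le_one]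
    nlinarith [sq_nonneg (b - 1 / 2)]
  have hAu : Integrable (fun u => A u) ν :=
    L.integrable_comp (integrable_id_of_ae_norm_eq_one hsupp)
  have hAv : Integrable (fun u => inner ℝ u w • A u) ν := by
    simpa only [L.map_smul, hL] using L.integrable_comp (integrable_inner_smul_self hsupp w)
  have hmean : ∫ u, A u ∂ν = 0 := by
    simp only [← hL]
    rw [L.integral_comp_comm (integrable_id_of_ae_norm_eq_one hsupp),
      integral_id_eq_zero_of_isometry_invariant hinv, map_zero]
  have hsecond : ∫ u, inner ℝ u w • A u ∂ν = (k : ℝ)⁻¹ • A w := by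
    simp only [← hL, ← L.map_smul]
    rw [L.integral_comp_comm (integrable_inner_smul_self hsupp w),
      integral_inner_smul_self hinv hsupp, L.map_smul]
  have hX := hsqrt.smul_prod hAu
  have hcX : Integrable (fun p : ℝ × EuclideanSpace ℝ (Fin k) => c + √(p.1 * (1 - p.1)) • A p.2)
      (μ.prod ν) := (integrable_const c).add hX
  simp_rw [mul_smul]
  rw [integral_sub hcX (hB.smul_prod hAv),
    integral_add (integrable_const c) hX, integral_const,
    integral_prod_smul (fun b => √(b * (1 - b))) (fun u => A u),
    integral_prod_smul (fun b => b) (fun u => inner ℝ u w • A u), hmean, hsecond]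
  simp only [probReal_univ, one_smul, smul_zero, add_zero, smul_smul, div_eq_mul_inv]

theorem expectation_zeta_general {k : ℕ} (hk : 1 ≤ k) (d : ℝ) (hd : 0 < d)
    (ν : Measure (EuclideanSpace ℝ (Fin k))) (hprob : IsProbabilityMeasure ν)
    (hsupp : ν {u : EuclideanSpace ℝ (Fin k) | ‖u‖ = 1}ᶜ = 0)
    (hinv : ∀ f : EuclideanSpace ℝ (Fin k) ≃ₗᵢ[ℝ] EuclideanSpace ℝ (Fin k), ν.map f = ν)
    (S Rt : Matrix (Fin k) (Fin k) ℝ)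
    (hRtS : Rt * Rt = S)
    (m : EuclideanSpace ℝ (Fin k))
    (ζ : ℝ → EuclideanSpace ℝ (Fin k) → EuclideanSpace ℝ (Fin k))
    (hζ : ∀ b u, ζ b u = Matrix.toEuclideanLin S⁻¹ m
      + Real.sqrt (b * (1 - b)) • Matrix.toEuclideanLin Rt⁻¹ u
      - (b * (inner ℝ u (Matrix.toEuclideanLin Rt⁻¹ m) : ℝ)) • Matrix.toEuclideanLin Rt⁻¹ u) :
    ∫ p : ℝ × EuclideanSpace ℝ (Fin k), ζ p.1 p.2
        ∂((betaMeasure ((k : ℝ) / 2) (d / 2)).prod ν) =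
      (((k : ℝ) + d - 1) / ((k : ℝ) + d)) • Matrix.toEuclideanLin S⁻¹ m := by
  have := hprob
  have hk' : (0 : ℝ) < k := by exact_mod_cast hk
  have ha : 0 < (k : ℝ) / 2 := by positivity
  have hb : 0 < d / 2 := by positivity
  have := ProbabilityTheory.isProbabilityMeasureBeta ha hb
  have hA : toEuclideanLin Rt⁻¹ (toEuclideanLin Rt⁻¹ m) = toEuclideanLin S⁻¹ m := by
    rw [← hRtS, Matrix.mul_inv_rev, toLpLin_mul_same, LinearMap.comp_apply]
  simp_rw [hζ]
  rw [betaMeasure_eq, integral_zeta_prod_sphere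
      (ProbabilityTheory.integrable_id_betaMeasure ha hb) hinv hsupp,
    ProbabilityTheory.integral_id_betaMeasure ha hb, hA]
  have hcoef : (1 : ℝ) - (k / 2) / (k / 2 + d / 2) / k = (k + d - 1) / (k + d) := by
    field_simp
  rw [← hcoef, sub_smul, one_smul]

/-- Let `B ~ Beta(k/2, d/2)` and let `u` be uniform on the unit sphere of
`ℝ^k` (law `ν`: the normalized rotation-invariant probability measure carried by the unit
sphere), independent of `B` (so that the pair `(B, u)` has the product law). With `S`
symmetric positive definite, `Rt` its unique symmetric positive definite square root
(`Rt * Rt = S`, `S^{-1/2} = Rt⁻¹`), and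
`ζ(B,u) = S⁻¹ m + √(B(1−B)) S^{-1/2} u − B·S^{-1/2} u uᵀ S^{-1/2} m`, one has
`E[ζ(B,u)] = ((k+d−1)/(k+d)) S⁻¹ m`. -/
theorem expectation_zeta {k : ℕ} (hk : 1 ≤ k) (d : ℝ) (hd : 0 < d)
    (ν : Measure (EuclideanSpace ℝ (Fin k))) (hprob : IsProbabilityMeasure ν)
    (hsupp : ν {u : EuclideanSpace ℝ (Fin k) | ‖u‖ = 1}ᶜ = 0)
    (hinv : ∀ f : EuclideanSpace ℝ (Fin k) ≃ₗᵢ[ℝ] EuclideanSpace ℝ (Fin k), ν.map f = ν)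
    (S Rt : Matrix (Fin k) (Fin k) ℝ)
    (hS : S.PosDef) (hRt : Rt.PosDef) (hRtS : Rt * Rt = S)
    (m : EuclideanSpace ℝ (Fin k))
    (ζ : ℝ → EuclideanSpace ℝ (Fin k) → EuclideanSpace ℝ (Fin k))
    (hζ : ∀ b u, ζ b u = Matrix.toEuclideanLin S⁻¹ m
      + Real.sqrt (b * (1 - b)) • Matrix.toEuclideanLin Rt⁻¹ u
      - (b * (inner ℝ u (Matrix.toEuclideanLin Rt⁻¹ m) : ℝ)) • Matrix.toEuclideanLin Rt⁻¹ u) :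
    ∫ p : ℝ × EuclideanSpace ℝ (Fin k), ζ p.1 p.2
        ∂((betaMeasure ((k : ℝ) / 2) (d / 2)).prod ν) =
      (((k : ℝ) + d - 1) / ((k : ℝ) + d)) • Matrix.toEuclideanLin S⁻¹ m :=
  expectation_zeta_general hk d hd ν hprob hsupp hinv S Rt hRtS m ζ hζ
end

section
/- Let k ≥ 1 be an integer, let S be a symmetric positive definite k×k real matrix with unique symmetric positive definite square root S^{1/2} (inverse S^{−1/2}), and let m ∈ ℝ^k. For B ∈ [0,1] and a unit vector u ∈ ℝ^k, define ζ(B,u) = S^{−1} m + √(B(1−B)) S^{−1/2} u − B · S^{−1/2} u uᵀ S^{−1/2} m, ε(B,u) = mᵀ S^{−1} m + 2√(B(1−B)) mᵀ S^{−1/2} u + B − B ( mᵀ S^{−1/2} u )², and Υ(B,u) = S^{−1} − B · S^{−1/2} u uᵀ S^{−1/2}. Then for every B ∈ [0,1] and every unit vector u ∈ ℝ^k, the matrix ε(B,u)·Υ(B,u) − ζ(B,u) ζ(B,u)ᵀ is symmetric positive semidefinite. -/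
open Matrix

/-!
Write `T = S^{-1/2}`, `p = √(1 - B)`, `q = √B` and `C = 1 - (1 - p) u uᵀ`; since `u` is a unit
vector, `C² = 1 - B u uᵀ`. For `a = T m + ((p - 1) uᵀ T m + q) u` one checks
`Υ = (T C)(T C)ᵀ`, `ζ = T C a` and `ε = aᵀ a`, so that
`ε Υ - ζ ζᵀ = (T C) (|a|² I - a aᵀ) (T C)ᵀ`, which is positive semidefinite by Cauchy–Schwarz.
-/

theorem dotProduct_sq_le_dotProduct_self_mul_dotProduct_self {n : Type*} [Fintype n]
    (x y : n → ℝ) : (x ⬝ᵥ y) ^ 2 ≤ (x ⬝ᵥ x) * (y ⬝ᵥ y) := by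
  simpa only [dotProduct, sq] using Finset.sum_mul_sq_le_sq_mul_sq Finset.univ x y

section

variable {n : Type*} [Fintype n] [DecidableEq n]

theorem posSemidef_dotProduct_self_smul_one_sub_vecMulVec (a : n → ℝ) :
    ((a ⬝ᵥ a) • (1 : Matrix n n ℝ) - vecMulVec a a).PosSemidef := by
  have hHerm : (vecMulVec a a).IsHermitian := transpose_vecMulVec a a
  refine .of_dotProduct_mulVec_nonneg
    ((isHermitian_one.smul (IsSelfAdjoint.all _)).sub hHerm) fun x => ?_
  have hquad : x ⬝ᵥ (((a ⬝ᵥ a) • (1 : Matrix n n ℝ) - vecMulVec a a) *ᵥ x)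
      = (a ⬝ᵥ a) * (x ⬝ᵥ x) - (a ⬝ᵥ x) ^ 2 := by
    simp only [sub_mulVec, smul_mulVec, one_mulVec, vecMulVec_mulVec, dotProduct_sub,
      dotProduct_smul, smul_eq_mul, op_smul_eq_smul, dotProduct_comm x a]
    ring
  rw [star_trivial, hquad, sub_nonneg]
  exact dotProduct_sq_le_dotProduct_self_mul_dotProduct_self a x

theorem posSemidef_dotProduct_self_smul_mul_transpose_sub_vecMulVec {l : Type*} [Fintype l]
    (D : Matrix l n ℝ) (a : n → ℝ) :
    ((a ⬝ᵥ a) • (D * Dᵀ) - vecMulVec (D *ᵥ a) (D *ᵥ a)).PosSemidef := by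
  have hfactor : (a ⬝ᵥ a) • (D * Dᵀ) - vecMulVec (D *ᵥ a) (D *ᵥ a)
      = D * ((a ⬝ᵥ a) • 1 - vecMulVec a a) * Dᴴ := by
    rw [conjTranspose_eq_transpose_of_trivial, Matrix.mul_sub, Matrix.sub_mul, mul_vecMulVec,
      vecMulVec_mul, vecMul_transpose, Matrix.mul_smul, Matrix.mul_one, Matrix.smul_mul]
  rw [hfactor]
  exact (posSemidef_dotProduct_self_smul_one_sub_vecMulVec a).mul_mul_conjTranspose_same D

theorem one_sub_smul_vecMulVec_mul_one_sub_smul_vecMulVec (u : n → ℝ) (r t : ℝ) :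
    (1 - r • vecMulVec u u) * (1 - t • vecMulVec u u)
      = 1 - (r + t - r * t * (u ⬝ᵥ u)) • vecMulVec u u := by
  simp only [Matrix.sub_mul, Matrix.mul_sub, Matrix.one_mul, Matrix.mul_one, Matrix.smul_mul,
    Matrix.mul_smul, vecMulVec_mul_vecMulVec, vecMulVec_smul, smul_sub, smul_smul, sub_smul,
    add_smul]
  module

theorem one_sub_smul_vecMulVec_mulVec (u v : n → ℝ) (r : ℝ) :
    (1 - r • vecMulVec u u) *ᵥ v = v - (r * (u ⬝ᵥ v)) • u := by
  rw [sub_mulVec, one_mulVec, smul_mulVec, vecMulVec_mulVec, op_smul_eq_smul, smul_smul]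

theorem one_sub_smul_vecMulVec_mul_self_of_sq {u : n → ℝ} {p B : ℝ} (hu : u ⬝ᵥ u = 1)
    (hp : p ^ 2 = 1 - B) :
    (1 - (1 - p) • vecMulVec u u) * (1 - (1 - p) • vecMulVec u u) = 1 - B • vecMulVec u u := by
  rw [one_sub_smul_vecMulVec_mul_one_sub_smul_vecMulVec, hu]
  congr 2
  linear_combination (-1 : ℝ) * hp

theorem one_sub_smul_vecMulVec_mulVec_of_sq {u : n → ℝ} {p B : ℝ} (hu : u ⬝ᵥ u = 1)
    (hp : p ^ 2 = 1 - B) (w : n → ℝ) (q : ℝ) :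
    (1 - (1 - p) • vecMulVec u u) *ᵥ (w + ((p - 1) * (u ⬝ᵥ w) + q) • u)
      = w + (q * p - B * (u ⬝ᵥ w)) • u := by
  rw [one_sub_smul_vecMulVec_mulVec]
  simp only [dotProduct_add, dotProduct_smul, hu, smul_eq_mul]
  match_scalars
  · ring
  · linear_combination (u ⬝ᵥ w) * hp

omit [DecidableEq n] in
theorem dotProduct_self_add_smul_of_sq {u : n → ℝ} {p q B : ℝ} (hu : u ⬝ᵥ u = 1)
    (hp : p ^ 2 = 1 - B) (hq : q ^ 2 = B) (w : n → ℝ) :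
    (w + ((p - 1) * (u ⬝ᵥ w) + q) • u) ⬝ᵥ (w + ((p - 1) * (u ⬝ᵥ w) + q) • u)
      = w ⬝ᵥ w + 2 * (q * p) * (u ⬝ᵥ w) + B - B * (u ⬝ᵥ w) ^ 2 := by
  simp only [dotProduct_add, add_dotProduct, dotProduct_smul, smul_dotProduct, hu, smul_eq_mul,
    dotProduct_comm w u]
  linear_combination hq + (u ⬝ᵥ w) ^ 2 * hp

end

theorem epsUpsilon_sub_zetazeta_posSemidef_general {k : ℕ}
    (S Rt : Matrix (Fin k) (Fin k) ℝ)
    (hRt : Rt.PosDef) (hRtS : Rt * Rt = S)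
    (m : Fin k → ℝ)
    (ζ : ℝ → (Fin k → ℝ) → (Fin k → ℝ))
    (hζ : ∀ B u, ζ B u = S⁻¹ *ᵥ m + Real.sqrt (B * (1 - B)) • (Rt⁻¹ *ᵥ u)
      - B • ((Rt⁻¹ * vecMulVec u u * Rt⁻¹) *ᵥ m))
    (ε : ℝ → (Fin k → ℝ) → ℝ)
    (hε : ∀ B u, ε B u = m ⬝ᵥ (S⁻¹ *ᵥ m) + 2 * Real.sqrt (B * (1 - B)) * (m ⬝ᵥ (Rt⁻¹ *ᵥ u))
      + B - B * (m ⬝ᵥ (Rt⁻¹ *ᵥ u)) ^ 2)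
    (Υ : ℝ → (Fin k → ℝ) → Matrix (Fin k) (Fin k) ℝ)
    (hΥ : ∀ B u, Υ B u = S⁻¹ - B • (Rt⁻¹ * vecMulVec u u * Rt⁻¹)) :
    ∀ B ∈ Set.Icc (0:ℝ) 1, ∀ u : Fin k → ℝ, u ⬝ᵥ u = 1 →
      (ε B u • Υ B u - vecMulVec (ζ B u) (ζ B u)).PosSemidef := by
  rintro B ⟨hB0, hB1⟩ u hu
  obtain ⟨p, q, hp, hq, hs⟩ : ∃ p q : ℝ, p ^ 2 = 1 - B ∧ q ^ 2 = B ∧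
      Real.sqrt (B * (1 - B)) = q * p :=
    ⟨_, _, Real.sq_sqrt (by linarith), Real.sq_sqrt hB0, Real.sqrt_mul hB0 _⟩
  set T := Rt⁻¹
  have hT : Tᵀ = T := conjTranspose_eq_transpose_of_trivial T ▸ hRt.isHermitian.inv
  have hSinv : S⁻¹ = T * T := by rw [← hRtS, Matrix.mul_inv_rev]
  set C : Matrix (Fin k) (Fin k) ℝ := 1 - (1 - p) • vecMulVec u u
  set a := T *ᵥ m + ((p - 1) * (u ⬝ᵥ (T *ᵥ m)) + q) • u
  have hΥD : Υ B u = (T * C) * (T * C)ᵀ := by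
    have hC : Cᵀ = C := by
      rw [transpose_sub, transpose_one, transpose_smul, transpose_vecMulVec]
    calc Υ B u = T * (1 - B • vecMulVec u u) * T := by
          rw [hΥ, hSinv, Matrix.mul_sub, Matrix.sub_mul, Matrix.mul_one, Matrix.mul_smul,
            Matrix.smul_mul]
      _ = (T * C) * (T * C)ᵀ := by
          rw [← one_sub_smul_vecMulVec_mul_self_of_sq hu hp, transpose_mul, hT, hC,
            Matrix.mul_assoc, Matrix.mul_assoc, Matrix.mul_assoc]
  have hζD : ζ B u = (T * C) *ᵥ a := by
    have hCa : C *ᵥ a = T *ᵥ m + (q * p - B * (u ⬝ᵥ (T *ᵥ m))) • u :=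
      one_sub_smul_vecMulVec_mulVec_of_sq hu hp (T *ᵥ m) q
    rw [hζ, hSinv, hs, ← mulVec_mulVec, ← mulVec_mulVec, ← mulVec_mulVec, vecMulVec_mulVec,
      op_smul_eq_smul, ← mulVec_mulVec, hCa, mulVec_add, mulVec_smul, mulVec_smul]
    module
  have hεa : ε B u = a ⬝ᵥ a := by
    rw [dotProduct_self_add_smul_of_sq hu hp hq, hε, hs, hSinv, ← mulVec_mulVec,
      dotProduct_mulVec, dotProduct_mulVec m T u, ← mulVec_transpose, hT, dotProduct_comm _ u]
  rw [hΥD, hζD, hεa]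
  exact posSemidef_dotProduct_self_smul_mul_transpose_sub_vecMulVec (T * C) a

/-- With `S` symmetric positive definite, `Rt` its unique symmetric positive
definite square root (`Rt * Rt = S`, `S^{-1/2} = Rt⁻¹`), for every `B ∈ [0,1]` and every unit
vector `u` (Euclidean norm one, i.e. `u ⬝ᵥ u = 1`), the matrix
`ε(B,u)·Υ(B,u) − ζ(B,u) ζ(B,u)ᵀ` is symmetric positive semidefinite, where
`ζ(B,u) = S⁻¹ m + √(B(1−B)) S^{-1/2} u − B S^{-1/2} u uᵀ S^{-1/2} m`,
`ε(B,u) = mᵀ S⁻¹ m + 2√(B(1−B)) mᵀ S^{-1/2} u + B − B (mᵀ S^{-1/2} u)²`,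
`Υ(B,u) = S⁻¹ − B S^{-1/2} u uᵀ S^{-1/2}`. -/
theorem epsUpsilon_sub_zetazeta_posSemidef {k : ℕ} (hk : 1 ≤ k)
    (S Rt : Matrix (Fin k) (Fin k) ℝ)
    (hS : S.PosDef) (hRt : Rt.PosDef) (hRtS : Rt * Rt = S)
    (m : Fin k → ℝ)
    (ζ : ℝ → (Fin k → ℝ) → (Fin k → ℝ))
    (hζ : ∀ B u, ζ B u = S⁻¹ *ᵥ m + Real.sqrt (B * (1 - B)) • (Rt⁻¹ *ᵥ u)
      - B • ((Rt⁻¹ * vecMulVec u u * Rt⁻¹) *ᵥ m))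
    (ε : ℝ → (Fin k → ℝ) → ℝ)
    (hε : ∀ B u, ε B u = m ⬝ᵥ (S⁻¹ *ᵥ m) + 2 * Real.sqrt (B * (1 - B)) * (m ⬝ᵥ (Rt⁻¹ *ᵥ u))
      + B - B * (m ⬝ᵥ (Rt⁻¹ *ᵥ u)) ^ 2)
    (Υ : ℝ → (Fin k → ℝ) → Matrix (Fin k) (Fin k) ℝ)
    (hΥ : ∀ B u, Υ B u = S⁻¹ - B • (Rt⁻¹ * vecMulVec u u * Rt⁻¹)) :
    ∀ B ∈ Set.Icc (0:ℝ) 1, ∀ u : Fin k → ℝ, u ⬝ᵥ u = 1 →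
      (ε B u • Υ B u - vecMulVec (ζ B u) (ζ B u)).PosSemidef :=
  epsUpsilon_sub_zetazeta_posSemidef_general S Rt hRt hRtS m ζ hζ ε hε Υ hΥ
end

section
/- Let A be a symmetric positive definite k×k real matrix, let c > 0, c' > 0, p > 0, q > 0 be real numbers, and let x̄ ∈ ℝ^k. Define h(m) = det( A + c' (m − x̄)(m − x̄)ᵀ )^{−q} · ( 1 + c (m − x̄)ᵀ ( A + c' (m − x̄)(m − x̄)ᵀ )^{−1} (m − x̄) )^{−p} for m ∈ ℝ^k. Then h attains its maximum over ℝ^k uniquely at m = x̄, with maximal value det(A)^{−q}. -/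
/-!
Put `v = m - x̄ ≠ 0` and `M = A + c' v vᵀ`. By the matrix determinant lemma
`det M = det A · (1 + c' vᵀ A⁻¹ v) > det A`, so the first factor of `h m` is below `det A ^ (-q)`;
since `M` is positive definite, `vᵀ M⁻¹ v > 0` and the second factor is below `1`.
At `m = x̄` the rank-one term vanishes and `h x̄ = det A ^ (-q)`.
-/

open Matrix

namespace Matrix

variable {n α : Type*} [Fintype n]

theorem PosDef.add_smul_vecMulVec_self {A : Matrix n n ℝ} (hA : A.PosDef)
    {c : ℝ} (hc : 0 ≤ c) (v : n → ℝ) : (A + c • vecMulVec v v).PosDef :=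
  hA.add_posSemidef ((posSemidef_vecMulVec_self_star v).smul hc)

variable [DecidableEq n]

theorem det_add_smul_vecMulVec [CommRing α] {A : Matrix n n α} (hA : IsUnit A.det)
    (c : α) (u v : n → α) :
    (A + c • vecMulVec u v).det = A.det * (1 + c * (v ⬝ᵥ A⁻¹ *ᵥ u)) := by
  have hfactor : A + c • vecMulVec u v =
      A * (1 + replicateCol Unit (A⁻¹ *ᵥ (c • u)) * replicateRow Unit v) := by
    rw [mul_add, mul_one, replicateCol_mulVec, Matrix.mul_assoc,
      mul_nonsing_inv_cancel_left A _ hA, ← vecMulVec_eq, smul_vecMulVec]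
  rw [hfactor, det_mul, det_one_add_replicateCol_mul_replicateRow, mulVec_smul,
    dotProduct_smul, smul_eq_mul]

theorem PosDef.det_lt_det_add_smul_vecMulVec_self {A : Matrix n n ℝ} (hA : A.PosDef)
    {c : ℝ} (hc : 0 < c) {v : n → ℝ} (hv : v ≠ 0) :
    A.det < (A + c • vecMulVec v v).det := by
  have hquad : 0 < v ⬝ᵥ A⁻¹ *ᵥ v := by simpa using hA.inv.dotProduct_mulVec_pos hv
  rw [det_add_smul_vecMulVec hA.det_pos.ne'.isUnit]
  exact lt_mul_of_one_lt_right hA.det_pos (lt_add_of_pos_right 1 (mul_pos hc hquad))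

end Matrix

/-- For `A` symmetric positive definite, `c, c' > 0`, `p, q > 0` and
`x̄ ∈ ℝ^k`, the function
`h(m) = det(A + c'(m−x̄)(m−x̄)ᵀ)^{−q} (1 + c (m−x̄)ᵀ (A + c'(m−x̄)(m−x̄)ᵀ)⁻¹ (m−x̄))^{−p}`
attains its maximum over `ℝ^k` uniquely at `m = x̄`, with maximal value `det(A)^{−q}`. -/
theorem empirical_bayes_mean_max {k : ℕ} (A : Matrix (Fin k) (Fin k) ℝ) (hA : A.PosDef)
    (c c' p q : ℝ) (hc : 0 < c) (hc' : 0 < c') (hp : 0 < p) (hq : 0 < q)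
    (xbar : Fin k → ℝ)
    (h : (Fin k → ℝ) → ℝ)
    (hh : ∀ m, h m = (A + c' • vecMulVec (m - xbar) (m - xbar)).det ^ (-q)
      * (1 + c * ((m - xbar) ⬝ᵥ
          ((A + c' • vecMulVec (m - xbar) (m - xbar))⁻¹ *ᵥ (m - xbar)))) ^ (-p)) :
    (∀ m : Fin k → ℝ, m ≠ xbar → h m < h xbar) ∧ h xbar = A.det ^ (-q) := by
  have hxbar : h xbar = A.det ^ (-q) := by simp [hh]
  refine ⟨fun m hm => ?_, hxbar⟩
  rw [hxbar, hh m]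
  set v := m - xbar
  have hv : v ≠ 0 := sub_ne_zero.mpr hm
  set M := A + c' • vecMulVec v v
  have hM : M.PosDef := hA.add_smul_vecMulVec_self hc'.le v
  have hquad : 0 < v ⬝ᵥ M⁻¹ *ᵥ v := by simpa using hM.inv.dotProduct_mulVec_pos hv
  have hdet : M.det ^ (-q) < A.det ^ (-q) :=
    Real.rpow_lt_rpow_of_neg hA.det_pos (hA.det_lt_det_add_smul_vecMulVec_self hc' hv)
      (neg_neg_iff_pos.mpr hq)
  have hfactor : (1 + c * (v ⬝ᵥ M⁻¹ *ᵥ v)) ^ (-p) < 1 :=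
    Real.rpow_lt_one_of_one_lt_of_neg (lt_add_of_pos_right 1 (mul_pos hc hquad)) (neg_neg_iff_pos.mpr hp)
  calc M.det ^ (-q) * (1 + c * (v ⬝ᵥ M⁻¹ *ᵥ v)) ^ (-p)
      < M.det ^ (-q) := mul_lt_of_lt_one_right (Real.rpow_pos_of_pos hM.det_pos _) hfactor
    _ < A.det ^ (-q) := hdet
end
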